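/- arXiv:2505.09778 — 4 statements merged into one kernel-verified Lean document; each statement's English description precedes it below -/
import Mathlib

section
/- One-iteration recursion of the R-OpEx method (pointwise form): Let X ⊆ ℝ^n be nonempty closed convex. Let F : ℝ^n → ℝ^n be monotone on X with ‖F(x₁) − F(x₂)‖ ≤ L_F‖x₁ − x₂‖ + M_F for all x₁, x₂ ∈ X, and let H : ℝ^n → ℝ^n be μ_H-strongly monotone on X with μ_H ≥ 0 and ‖H(x₁) − H(x₂)‖ ≤ L_H‖x₁ − x₂‖ + M_H for all x₁, x₂ ∈ X. Fix points x_{k−1}, x_k ∈ X, vectors 𝔉_{k−1}, 𝔉_k, 𝔉_{k+1}, ℌ_{k−1}, ℌ_k, ℌ_{k+1} ∈ ℝ^n, and scalars γ_k > 0, θ_k ≥ 0, η_{k−1} ≥ 0, η_k ≥ 0. Define x_{k+1} := argmin_{x ∈ X} ⟨𝔉_k + η_k ℌ_k + θ_k[𝔉_k + η_{k−1} ℌ_k − 𝔉_{k−1} − η_{k−1} ℌ_{k−1}], x⟩ + (1/(2γ_k))‖x − x_k‖². Define δ_j^F := 𝔉_j − F(x_j) and δ_j^H := ℌ_j − H(x_j)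 for j ∈ {k−1, k, k+1}, and Δ𝔒_j := 𝔉_j − 𝔉_{j−1} + η_{j−1}(ℌ_j − ℌ_{j−1}) for j ∈ {k, k+1}. Then for every x ∈ X: ⟨F(x) + η_k H(x), x_{k+1} − x⟩ ≤ (1/(2γ_k))·(‖x − x_k‖² − ‖x_{k+1} − x_k‖²) − (1/(2γ_k) + η_k μ_H)‖x − x_{k+1}‖² + ⟨Δ𝔒_{k+1}, x_{k+1} − x⟩ − θ_k⟨Δ𝔒_k, x_k − x⟩ + θ_k(L_F + η_{k−1} L_H)‖x_k − x_{k−1}‖·‖x_{k+1} − x_k‖ − ⟨δ_{k+1}^F + η_k δ_{k+1}^H, x_{k+1} − x⟩ − θ_k⟨δ_k^F − δ_{k−1}^F + η_{k−1}(δ_k^H − δ_{k−1}^H), x_{k+1} − x_k⟩ + θ_k(M_F + η_{k−1} M_H)‖x_{k+1} − x_k‖. -/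
open RealInnerProductSpace

lemma ropex_scalar_limit (G D : ℝ) (hD : 0 ≤ D)
    (h : ∀ t : ℝ, 0 < t → t ≤ 1 → 0 ≤ G + t * D) : 0 ≤ G := by
  rw [← neg_nonpos, ← sub_zero (-G)] at *
  refine le_of_forall_pos_le_add fun ε hε => ?_
  have ht0 : 0 < min 1 (ε / (D + 1)) := lt_min one_pos (div_pos hε (by linarith))
  have h1 := h _ ht0 (min_le_left _ _)
  have h2 : min 1 (ε / (D + 1)) * D ≤ ε := by
    have := min_le_right 1 (ε / (D + 1))
    have : min 1 (ε / (D + 1)) * D ≤ (ε / (D + 1)) * D := by nlinarith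
    have h3 : (ε / (D + 1)) * D ≤ ε := by
      rw [div_mul_eq_mul_div, div_le_iff₀ (by linarith)]; nlinarith
    linarith
  linarith

lemma ropex_vi {n : ℕ} {X : Set (EuclideanSpace ℝ (Fin n))} (hconv : Convex ℝ X)
    (g xk xkp1 : EuclideanSpace ℝ (Fin n)) (γ : ℝ) (hγ : 0 < γ) (hxp : xkp1 ∈ X)
    (hmin : ∀ z ∈ X, ⟪g, xkp1⟫ + 1 / (2 * γ) * ‖xkp1 - xk‖ ^ 2
        ≤ ⟪g, z⟫ + 1 / (2 * γ) * ‖z - xk‖ ^ 2) :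
    ∀ x ∈ X, ⟪g, xkp1 - x⟫
      ≤ 1 / (2 * γ) * (‖x - xk‖ ^ 2 - ‖xkp1 - xk‖ ^ 2 - ‖x - xkp1‖ ^ 2) := by
  intro x hx
  have hnormid : ⟪xkp1 - xk, x - xkp1⟫
      = (‖x - xk‖ ^ 2 - ‖xkp1 - xk‖ ^ 2 - ‖x - xkp1‖ ^ 2) / 2 := by
    have h1 := norm_add_sq_real (xkp1 - xk) (x - xkp1)
    have h2 : (xkp1 - xk) + (x - xkp1) = x - xk := by abel
    rw [h2] at h1; linarith
  have key : 0 ≤ (⟪g, x - xkp1⟫ + 1/γ * ⟪xkp1 - xk, x - xkp1⟫) := by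
    refine ropex_scalar_limit _ (1/(2*γ) * ‖x - xkp1‖^2) (by positivity) ?_
    intro t ht0 ht1
    have hz : xkp1 + t • (x - xkp1) ∈ X := by
      have he : xkp1 + t • (x - xkp1) = (1 - t) • xkp1 + t • x := by module
      rw [he]; exact hconv hxp hx (by linarith) ht0.le (by ring)
    have h := hmin _ hz
    have e1 : ⟪g, xkp1 + t • (x - xkp1)⟫ = ⟪g, xkp1⟫ + t * ⟪g, x - xkp1⟫ := by
      rw [inner_add_right, real_inner_smul_right]
    have e2 : ‖xkp1 + t • (x - xkp1) - xk‖ ^ 2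
        = ‖xkp1 - xk‖ ^ 2 + 2 * (t * ⟪xkp1 - xk, x - xkp1⟫) + t^2 * ‖x - xkp1‖ ^ 2 := by
      have he : xkp1 + t • (x - xkp1) - xk = (xkp1 - xk) + t • (x - xkp1) := by abel
      rw [he, norm_add_sq_real, real_inner_smul_right, norm_smul, mul_pow]
      simp [abs_of_pos ht0]
    rw [e1, e2] at h
    have hγne : γ ≠ 0 := hγ.ne'
    have hexp : t * (⟪g, x - xkp1⟫ + 1/γ * ⟪xkp1 - xk, x - xkp1⟫)
        + t * (t * (1/(2*γ) * ‖x - xkp1‖^2))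
        = t * ⟪g, x - xkp1⟫ + 1/(2*γ) * (2 * (t * ⟪xkp1 - xk, x - xkp1⟫) + t^2 * ‖x - xkp1‖^2) := by
      field_simp; ring
    have h' : 0 ≤ t * ((⟪g, x - xkp1⟫ + 1/γ * ⟪xkp1 - xk, x - xkp1⟫) + t * (1/(2*γ) * ‖x - xkp1‖^2)) := by
      nlinarith [h, hexp]
    exact nonneg_of_mul_nonneg_right h' ht0
  have hflip : ⟪g, xkp1 - x⟫ = - ⟪g, x - xkp1⟫ := by
    rw [← inner_neg_right]; congr 1; abel
  rw [hflip]
  rw [hnormid] at key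
  have : 1/γ * ((‖x - xk‖ ^ 2 - ‖xkp1 - xk‖ ^ 2 - ‖x - xkp1‖ ^ 2) / 2)
      = 1/(2*γ) * (‖x - xk‖ ^ 2 - ‖xkp1 - xk‖ ^ 2 - ‖x - xkp1‖ ^ 2) := by
    rw [div_mul_eq_mul_div, div_mul_eq_mul_div, one_mul, one_mul, div_div]
  linarith [key, this.symm.le]

/-- **One-iteration recursion of the R-OpEx method (pointwise form).** -/
theorem ropex_one_iteration {n : ℕ} (X : Set (EuclideanSpace ℝ (Fin n)))
    (hne : X.Nonempty) (hcl : IsClosed X) (hconv : Convex ℝ X)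
    (F H : EuclideanSpace ℝ (Fin n) → EuclideanSpace ℝ (Fin n))
    (LF MF LH MH μH : ℝ) (hμ : 0 ≤ μH)
    (hFmono : ∀ a ∈ X, ∀ b ∈ X, 0 ≤ ⟪F a - F b, a - b⟫)
    (hFlip : ∀ a ∈ X, ∀ b ∈ X, ‖F a - F b‖ ≤ LF * ‖a - b‖ + MF)
    (hHmono : ∀ a ∈ X, ∀ b ∈ X, μH * ‖a - b‖ ^ 2 ≤ ⟪H a - H b, a - b⟫)
    (hHlip : ∀ a ∈ X, ∀ b ∈ X, ‖H a - H b‖ ≤ LH * ‖a - b‖ + MH)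
    (xkm1 xk : EuclideanSpace ℝ (Fin n)) (hxm : xkm1 ∈ X) (hxk : xk ∈ X)
    (Fkm1 Fk Fkp1 Hkm1 Hk Hkp1 : EuclideanSpace ℝ (Fin n))
    (γ θ ηm η : ℝ) (hγ : 0 < γ) (hθ : 0 ≤ θ) (hηm : 0 ≤ ηm) (hη : 0 ≤ η)
    (xkp1 : EuclideanSpace ℝ (Fin n)) (hxp : xkp1 ∈ X)
    (hmin : ∀ z ∈ X,
      ⟪Fk + η • Hk + θ • (Fk + ηm • Hk - Fkm1 - ηm • Hkm1), xkp1⟫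
          + 1 / (2 * γ) * ‖xkp1 - xk‖ ^ 2
        ≤ ⟪Fk + η • Hk + θ • (Fk + ηm • Hk - Fkm1 - ηm • Hkm1), z⟫
          + 1 / (2 * γ) * ‖z - xk‖ ^ 2) :
    ∀ x ∈ X,
      ⟪F x + η • H x, xkp1 - x⟫
        ≤ 1 / (2 * γ) * (‖x - xk‖ ^ 2 - ‖xkp1 - xk‖ ^ 2)
          - (1 / (2 * γ) + η * μH) * ‖x - xkp1‖ ^ 2
          + ⟪Fkp1 - Fk + η • (Hkp1 - Hk), xkp1 - x⟫
          - θ * ⟪Fk - Fkm1 + ηm • (Hk - Hkm1), xk - x⟫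
          + θ * (LF + ηm * LH) * ‖xk - xkm1‖ * ‖xkp1 - xk‖
          - ⟪(Fkp1 - F xkp1) + η • (Hkp1 - H xkp1), xkp1 - x⟫
          - θ * ⟪(Fk - F xk) - (Fkm1 - F xkm1) + ηm • ((Hk - H xk) - (Hkm1 - H xkm1)), xkp1 - xk⟫
          + θ * (MF + ηm * MH) * ‖xkp1 - xk‖ := by
  intro x hx
  -- (I1) variational inequality consequence
  have I1 := ropex_vi hconv (Fk + η • Hk + θ • (Fk + ηm • Hk - Fkm1 - ηm • Hkm1))
      xk xkp1 γ hγ hxp hmin x hx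
  -- (I2) strong monotonicity of F + η H at (xkp1, x)
  have I2 : η * μH * ‖x - xkp1‖ ^ 2
      ≤ ⟪(F xkp1 - F x) + η • (H xkp1 - H x), xkp1 - x⟫ := by
    have h1 := hFmono xkp1 hxp x hx
    have h2 := hHmono xkp1 hxp x hx
    have h2' := mul_le_mul_of_nonneg_left h2 hη
    rw [inner_add_left, real_inner_smul_left]
    rw [norm_sub_rev x xkp1]
    nlinarith [h1, h2']
  -- (I3) Cauchy-Schwarz + Lipschitz bound
  have I3 : -(θ * ⟪(F xk - F xkm1) + ηm • (H xk - H xkm1), xkp1 - xk⟫)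
      ≤ θ * (LF + ηm * LH) * ‖xk - xkm1‖ * ‖xkp1 - xk‖
        + θ * (MF + ηm * MH) * ‖xkp1 - xk‖ := by
    have hcs : -⟪(F xk - F xkm1) + ηm • (H xk - H xkm1), xkp1 - xk⟫
        ≤ ‖(F xk - F xkm1) + ηm • (H xk - H xkm1)‖ * ‖xkp1 - xk‖ := by
      have := abs_real_inner_le_norm ((F xk - F xkm1) + ηm • (H xk - H xkm1)) (xkp1 - xk)
      have := neg_abs_le (⟪(F xk - F xkm1) + ηm • (H xk - H xkm1), xkp1 - xk⟫)
      linarith [abs_real_inner_le_norm ((F xk - F xkm1) + ηm • (H xk - H xkm1)) (xkp1 - xk),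
        neg_abs_le (⟪(F xk - F xkm1) + ηm • (H xk - H xkm1), xkp1 - xk⟫)]
    have hnu : ‖(F xk - F xkm1) + ηm • (H xk - H xkm1)‖
        ≤ (LF + ηm * LH) * ‖xk - xkm1‖ + (MF + ηm * MH) := by
      have hF := hFlip xk hxk xkm1 hxm
      have hH := hHlip xk hxk xkm1 hxm
      have htri := norm_add_le (F xk - F xkm1) (ηm • (H xk - H xkm1))
      have hsm : ‖ηm • (H xk - H xkm1)‖ = ηm * ‖H xk - H xkm1‖ := by
        rw [norm_smul, Real.norm_eq_abs, abs_of_nonneg hηm]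
      have hH' := mul_le_mul_of_nonneg_left hH hηm
      rw [hsm] at htri
      nlinarith [htri, hF, hH']
    have hn : (0:ℝ) ≤ ‖xkp1 - xk‖ := norm_nonneg _
    have step : -⟪(F xk - F xkm1) + ηm • (H xk - H xkm1), xkp1 - xk⟫
        ≤ ((LF + ηm * LH) * ‖xk - xkm1‖ + (MF + ηm * MH)) * ‖xkp1 - xk‖ := by
      nlinarith [hcs, hnu, hn]
    have := mul_le_mul_of_nonneg_left step hθ
    nlinarith [this]
  -- (E) exact algebraic identity
  have E : ⟪F x + η • H x, xkp1 - x⟫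
      = ⟪Fk + η • Hk + θ • (Fk + ηm • Hk - Fkm1 - ηm • Hkm1), xkp1 - x⟫
        + ⟪Fkp1 - Fk + η • (Hkp1 - Hk), xkp1 - x⟫
        - θ * ⟪Fk - Fkm1 + ηm • (Hk - Hkm1), xk - x⟫
        - θ * ⟪(F xk - F xkm1) + ηm • (H xk - H xkm1), xkp1 - xk⟫
        - θ * ⟪(Fk - F xk) - (Fkm1 - F xkm1) + ηm • ((Hk - H xk) - (Hkm1 - H xkm1)), xkp1 - xk⟫
        - ⟪(Fkp1 - F xkp1) + η • (Hkp1 - H xkp1), xkp1 - x⟫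
        - ⟪(F xkp1 - F x) + η • (H xkp1 - H x), xkp1 - x⟫ := by
    simp only [inner_add_left, inner_sub_left, inner_add_right, inner_sub_right,
      real_inner_smul_left, real_inner_smul_right]
    ring
  linarith [I1, I2, I3, E.le, E.ge]
end

section
/- Augmented-sequence summation bound: Let S ⊆ ℝ^n be nonempty closed convex, let x_1 ∈ ℝ^n, let K ≥ 2 be an integer, let δ_2, …, δ_K be arbitrary vectors in ℝ^n, and let τ_k, γ_k, η_k > 0 for 1 ≤ k ≤ K−1 satisfy τ_k/(γ_k η_k) ≤ τ_{k−1}/(γ_{k−1} η_{k−1}) for all 2 ≤ k ≤ K−1. Define the sequence x_k^a by x_1^a = x_2^a = x_1 and, for k ≥ 2, x_{k+1}^a := argmin_{x ∈ S} −⟨γ_{k−1} δ_k, x⟩ + (1/2)‖x − x_k^a‖². Then for every x ∈ S: Σ_{k=1}^{K−1} (τ_k/η_k)⟨δ_{k+1}, x − x_{k+1}^a⟩ ≤ (τ_1/(2γ_1 η_1))‖x − x_1‖² + Σ_{k=1}^{K−1} (γ_k τ_k/(2η_k))‖δ_{k+1}‖². -/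
/-!
Each minimization step is a projection: `p` minimizes `-⟪c, ·⟫ + ½‖· - a‖²` over `S` exactly
when it is the projection of `a + c` onto `S`, so the obtuse-angle criterion gives
`⟪c - (p - a), x - p⟫ ≤ 0` for `x ∈ S`. Combined with Young's inequality this yields the
one-step bound `2⟪c, x - a⟫ + ‖x - p‖² ≤ ‖x - a‖² + ‖c‖²`. Scaled by `τ_k / (2 γ_k η_k)`, the
steps telescope because these weights are nonincreasing, and the last distance term is dropped.
-/

open RealInnerProductSpace

section ProxStep

variable {E : Type*} [NormedAddCommGroup E] [InnerProductSpace ℝ E] {S : Set E} {c a p : E}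

theorem inner_sub_sub_nonpos_of_isMinOn (hS : Convex ℝ S) (hp : p ∈ S)
    (hmin : ∀ x ∈ S, -⟪c, p⟫ + 1 / 2 * ‖p - a‖ ^ 2 ≤ -⟪c, x⟫ + 1 / 2 * ‖x - a‖ ^ 2) :
    ∀ x ∈ S, ⟪c - (p - a), x - p⟫ ≤ 0 := by
  have hdist_sq : ∀ y, ‖a + c - y‖ ^ 2 = ‖y - a‖ ^ 2 - 2 * ⟪c, y⟫ + ‖c‖ ^ 2 + 2 * ⟪c, a⟫ := by
    intro y
    rw [show a + c - y = (a - y) + c by abel, norm_add_sq_real, norm_sub_rev a y,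
      inner_sub_left, real_inner_comm c y, real_inner_comm c a]
    ring
  have hproj : ‖a + c - p‖ = ⨅ w : S, ‖a + c - w‖ := by
    have : Nonempty S := ⟨⟨p, hp⟩⟩
    have hbdd : BddBelow (Set.range fun w : S => ‖a + c - w‖) :=
      ⟨0, Set.forall_mem_range.2 fun _ => norm_nonneg _⟩
    refine le_antisymm (le_ciInf fun w => ?_) (ciInf_le hbdd ⟨p, hp⟩)
    refine (sq_le_sq₀ (norm_nonneg _) (norm_nonneg _)).mp ?_
    rw [hdist_sq, hdist_sq]
    linarith [hmin w w.2]
  intro x hx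
  simpa only [show a + c - p = c - (p - a) by abel] using
    (norm_eq_iInf_iff_real_inner_le_zero hS hp).mp hproj x hx

theorem two_mul_inner_add_norm_sq_le_of_isMinOn (hS : Convex ℝ S) (hp : p ∈ S)
    (hmin : ∀ x ∈ S, -⟪c, p⟫ + 1 / 2 * ‖p - a‖ ^ 2 ≤ -⟪c, x⟫ + 1 / 2 * ‖x - a‖ ^ 2)
    {x : E} (hx : x ∈ S) :
    2 * ⟪c, x - a⟫ + ‖x - p‖ ^ 2 ≤ ‖x - a‖ ^ 2 + ‖c‖ ^ 2 := by
  have hvi := inner_sub_sub_nonpos_of_isMinOn hS hp hmin x hx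
  have hsplit : x - a = (x - p) + (p - a) := by abel
  have hyoung : 0 ≤ ‖c - (p - a)‖ ^ 2 := sq_nonneg _
  rw [inner_sub_left, real_inner_comm (x - p) (p - a)] at hvi
  rw [norm_sub_sq_real] at hyoung
  rw [hsplit, inner_add_right, norm_add_sq_real]
  linarith

end ProxStep

theorem weighted_step_le {γ η τ t r r' q : ℝ} (hγ : 0 < γ) (hη : 0 < η) (hτ : 0 ≤ τ)
    (h : 2 * γ * t + r' ≤ r + γ ^ 2 * q) :
    τ / η * t + τ / (2 * γ * η) * r' ≤ τ / (2 * γ * η) * r + γ * τ / (2 * η) * q := by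
  have hscaled := mul_le_mul_of_nonneg_left h (by positivity : 0 ≤ τ / (2 * γ * η))
  have ht : τ / (2 * γ * η) * (2 * γ * t) = τ / η * t := by field_simp
  have hq : τ / (2 * γ * η) * (γ ^ 2 * q) = γ * τ / (2 * η) * q := by field_simp
  rw [mul_add, mul_add, ht, hq] at hscaled
  exact hscaled

theorem sum_Icc_le_of_telescoping {a b w D : ℕ → ℝ} {m : ℕ} (hm : 1 ≤ m)
    (hD : ∀ k, 0 ≤ D k) (hw : 0 ≤ w m) (hanti : ∀ k, 1 ≤ k → k < m → w (k + 1) ≤ w k)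
    (hstep : ∀ k, 1 ≤ k → k ≤ m → a k + w k * D (k + 1) ≤ w k * D k + b k) :
    ∑ k ∈ Finset.Icc 1 m, a k ≤ w 1 * D 1 + ∑ k ∈ Finset.Icc 1 m, b k := by
  suffices h : ∀ j, 1 ≤ j → j ≤ m →
      ∑ k ∈ Finset.Icc 1 j, a k + w j * D (j + 1) ≤ w 1 * D 1 + ∑ k ∈ Finset.Icc 1 j, b k by
    linarith [h m hm le_rfl, mul_nonneg hw (hD (m + 1))]
  intro j hj
  induction j, hj using Nat.le_induction with
  | base => simpa using hstep 1 le_rfl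
  | succ j hj ih =>
    intro hjm
    rw [Finset.sum_Icc_succ_top (by omega), Finset.sum_Icc_succ_top (by omega)]
    have hmono := mul_le_mul_of_nonneg_right (hanti j hj hjm) (hD (j + 1))
    linarith [ih (by omega), hstep (j + 1) (by omega) hjm]

theorem augmented_sequence_bound_general {n : ℕ} (S : Set (EuclideanSpace ℝ (Fin n)))
    (hconv : Convex ℝ S)
    (x1 : EuclideanSpace ℝ (Fin n)) (K : ℕ) (hK : 2 ≤ K)
    (δ : ℕ → EuclideanSpace ℝ (Fin n)) (τ γ η : ℕ → ℝ)
    (hτ : ∀ k, 1 ≤ k → k ≤ K - 1 → 0 < τ k)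
    (hγ : ∀ k, 1 ≤ k → k ≤ K - 1 → 0 < γ k)
    (hη : ∀ k, 1 ≤ k → k ≤ K - 1 → 0 < η k)
    (hdec : ∀ k, 2 ≤ k → k ≤ K - 1 →
      τ k / (γ k * η k) ≤ τ (k - 1) / (γ (k - 1) * η (k - 1)))
    (xa : ℕ → EuclideanSpace ℝ (Fin n))
    (hxa2 : xa 2 = x1)
    (hmem : ∀ k, 2 ≤ k → xa (k + 1) ∈ S)
    (hmin : ∀ k, 2 ≤ k → ∀ x ∈ S,
      -⟪γ (k - 1) • δ k, xa (k + 1)⟫ + 1 / 2 * ‖xa (k + 1) - xa k‖ ^ 2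
        ≤ -⟪γ (k - 1) • δ k, x⟫ + 1 / 2 * ‖x - xa k‖ ^ 2) :
    ∀ x ∈ S,
      ∑ k ∈ Finset.Icc 1 (K - 1), τ k / η k * ⟪δ (k + 1), x - xa (k + 1)⟫
        ≤ τ 1 / (2 * γ 1 * η 1) * ‖x - x1‖ ^ 2
          + ∑ k ∈ Finset.Icc 1 (K - 1), γ k * τ k / (2 * η k) * ‖δ (k + 1)‖ ^ 2 := by
  intro x hx
  rw [← hxa2]
  refine sum_Icc_le_of_telescoping (m := K - 1) (w := fun k => τ k / (2 * γ k * η k))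
    (D := fun k => ‖x - xa (k + 1)‖ ^ 2) (by omega) (fun _ => sq_nonneg _) ?_
    (fun k hk hkm => ?_) (fun k hk hkm => ?_)
  · have := hτ (K - 1) (by omega) le_rfl
    have := hγ (K - 1) (by omega) le_rfl
    have := hη (K - 1) (by omega) le_rfl
    positivity
  · have := hdec (k + 1) (by omega) (by omega)
    simp only [Nat.add_sub_cancel] at this
    have halve : ∀ i, τ i / (2 * γ i * η i) = τ i / (γ i * η i) / 2 := fun i => by ring
    rw [halve, halve]
    linarith
  · have hmin' := hmin (k + 1) (by omega)
    simp only [Nat.add_sub_cancel] at hmin'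
    have hstep := two_mul_inner_add_norm_sq_le_of_isMinOn hconv (hmem (k + 1) (by omega)) hmin' hx
    rw [real_inner_smul_left, norm_smul, Real.norm_of_nonneg (hγ k hk hkm).le, mul_pow] at hstep
    exact weighted_step_le (hγ k hk hkm) (hη k hk hkm) (hτ k hk hkm).le (by linarith)

/-- **Augmented-sequence summation bound.** -/
theorem augmented_sequence_bound {n : ℕ} (S : Set (EuclideanSpace ℝ (Fin n)))
    (hne : S.Nonempty) (hcl : IsClosed S) (hconv : Convex ℝ S)
    (x1 : EuclideanSpace ℝ (Fin n)) (K : ℕ) (hK : 2 ≤ K)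
    (δ : ℕ → EuclideanSpace ℝ (Fin n)) (τ γ η : ℕ → ℝ)
    (hτ : ∀ k, 1 ≤ k → k ≤ K - 1 → 0 < τ k)
    (hγ : ∀ k, 1 ≤ k → k ≤ K - 1 → 0 < γ k)
    (hη : ∀ k, 1 ≤ k → k ≤ K - 1 → 0 < η k)
    (hdec : ∀ k, 2 ≤ k → k ≤ K - 1 →
      τ k / (γ k * η k) ≤ τ (k - 1) / (γ (k - 1) * η (k - 1)))
    (xa : ℕ → EuclideanSpace ℝ (Fin n))
    (hxa1 : xa 1 = x1) (hxa2 : xa 2 = x1)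
    (hmem : ∀ k, 2 ≤ k → xa (k + 1) ∈ S)
    (hmin : ∀ k, 2 ≤ k → ∀ x ∈ S,
      -⟪γ (k - 1) • δ k, xa (k + 1)⟫ + 1 / 2 * ‖xa (k + 1) - xa k‖ ^ 2
        ≤ -⟪γ (k - 1) • δ k, x⟫ + 1 / 2 * ‖x - xa k‖ ^ 2) :
    ∀ x ∈ S,
      ∑ k ∈ Finset.Icc 1 (K - 1), τ k / η k * ⟪δ (k + 1), x - xa (k + 1)⟫
        ≤ τ 1 / (2 * γ 1 * η 1) * ‖x - x1‖ ^ 2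
          + ∑ k ∈ Finset.Icc 1 (K - 1), γ k * τ k / (2 * η k) * ‖δ (k + 1)‖ ^ 2 :=
  augmented_sequence_bound_general S hconv x1 K hK δ τ γ η hτ hγ hη hdec xa hxa2 hmem hmin
end

section
/- Combined lower bound on the optimality gap: Let X ⊆ ℝ^n be nonempty closed convex, let F, H : ℝ^n → ℝ^n, let X_F^* ⊆ X be the nonempty closed convex solution set of VI(F, X), suppose VI(F, X) is α-weakly sharp for some α > 0 (i.e., ⟨F(x*), x − x*⟩ ≥ α·dist(x, X_F^*) for all x ∈ X and x* ∈ X_F^*), and suppose ‖H(x)‖ ≤ B_H for all x ∈ X_F^*. Then for every x̄ ∈ X, Gap(x̄, H, X_F^*) ≥ −(B_H/α)·Gap(x̄, F, X), where Gap(x̃, G, S) := sup_{x ∈ S} ⟨G(x), x̃ − x⟩. -/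
open RealInnerProductSpace

/-- The gap function `Gap(x̃, G, S) = sup_{y ∈ S} ⟪G y, x̃ − y⟫`, valued in the
extended reals. -/
noncomputable def Gap {n : ℕ} (G : EuclideanSpace ℝ (Fin n) → EuclideanSpace ℝ (Fin n))
    (S : Set (EuclideanSpace ℝ (Fin n))) (xt : EuclideanSpace ℝ (Fin n)) : EReal :=
  ⨆ y ∈ S, ((⟪G y, xt - y⟫ : ℝ) : EReal)

/-- The solution set `X_F^*` of the variational inequality `VI(F, X)`. -/
def VISol {n : ℕ} (F : EuclideanSpace ℝ (Fin n) → EuclideanSpace ℝ (Fin n))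
    (X : Set (EuclideanSpace ℝ (Fin n))) : Set (EuclideanSpace ℝ (Fin n)) :=
  {x | x ∈ X ∧ ∀ y ∈ X, 0 ≤ ⟪F x, y - x⟫}

/-- **Combined lower bound on the optimality gap**: under `α`-weak sharpness of
`VI(F, X)` and `‖H‖ ≤ B_H` on `X_F^*`, for every `x̄ ∈ X`,
`Gap(x̄, H, X_F^*) ≥ −(B_H/α) · Gap(x̄, F, X)`. -/
theorem combined_gap_lower_bound {n : ℕ} (X : Set (EuclideanSpace ℝ (Fin n)))
    (hne : X.Nonempty) (hcl : IsClosed X) (hconv : Convex ℝ X)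
    (F H : EuclideanSpace ℝ (Fin n) → EuclideanSpace ℝ (Fin n))
    (hsolne : (VISol F X).Nonempty) (hsolcl : IsClosed (VISol F X))
    (hsolconv : Convex ℝ (VISol F X))
    (α : ℝ) (hα : 0 < α)
    (hws : ∀ x ∈ X, ∀ xs ∈ VISol F X,
      α * Metric.infDist x (VISol F X) ≤ ⟪F xs, x - xs⟫)
    (BH : ℝ) (hbd : ∀ x ∈ VISol F X, ‖H x‖ ≤ BH) :
    ∀ xb ∈ X,
      -(((BH / α : ℝ) : EReal) * Gap F X xb) ≤ Gap H (VISol F X) xb := by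
  intro xb hxb
  obtain ⟨p, hp, hpd⟩ := hsolcl.exists_infDist_eq_dist hsolne xb
  set d := Metric.infDist xb (VISol F X) with hd
  have hd0 : 0 ≤ d := Metric.infDist_nonneg
  set r : ℝ := ⟪H p, xb - p⟫ with hr
  have hnorm : ‖xb - p‖ = d := by
    rw [hpd, dist_eq_norm]
  have hHp : ‖H p‖ ≤ BH := hbd p hp
  have hBH0 : 0 ≤ BH := le_trans (norm_nonneg _) hHp
  have hrlb : -(BH * d) ≤ r := by
    have h1 : |r| ≤ ‖H p‖ * ‖xb - p‖ := abs_real_inner_le_norm _ _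
    have h2 : ‖H p‖ * ‖xb - p‖ ≤ BH * d := by
      rw [hnorm]
      exact mul_le_mul_of_nonneg_right hHp hd0
    nlinarith [neg_abs_le r]
  have hrgap : (r : EReal) ≤ Gap H (VISol F X) xb := by
    exact le_iSup₂ (f := fun y (_ : y ∈ VISol F X) => ((⟪H y, xb - y⟫ : ℝ) : EReal)) p hp
  have hGlb : ((α * d : ℝ) : EReal) ≤ Gap F X xb := by
    have h1 : α * d ≤ ⟪F p, xb - p⟫ := hws xb hxb p hp
    calc ((α * d : ℝ) : EReal) ≤ ((⟪F p, xb - p⟫ : ℝ) : EReal) := by exact_mod_cast h1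
      _ ≤ Gap F X xb :=
        le_iSup₂ (f := fun y (_ : y ∈ X) => ((⟪F y, xb - y⟫ : ℝ) : EReal)) p hp.1
  set G := Gap F X xb with hG
  have hGbot : G ≠ ⊥ := ne_bot_of_le_ne_bot (EReal.coe_ne_bot _) hGlb
  set c : ℝ := BH / α with hc
  have hc0 : 0 ≤ c := div_nonneg hBH0 hα.le
  rcases eq_or_ne G ⊤ with htop | htop
  · rw [htop]
    rcases eq_or_lt_of_le hc0 with hc01 | hcpos
    · have hBH : BH = 0 := by
        have h0 : BH / α = 0 := by rw [← hc, ← hc01]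
        exact (div_eq_zero_iff.mp h0).resolve_right hα.ne'
      rw [← hc01, EReal.coe_zero, zero_mul, neg_zero]
      refine le_trans ?_ hrgap
      have : (0 : ℝ) ≤ r := by nlinarith
      exact_mod_cast this
    · have : ((c : ℝ) : EReal) * ⊤ = ⊤ := EReal.coe_mul_top_of_pos hcpos
      rw [this]
      simp
  · lift G to ℝ using ⟨htop, hGbot⟩ with g hg
    have hg' : α * d ≤ g := by exact_mod_cast hGlb
    refine le_trans ?_ hrgap
    have key : -(c * g) ≤ r := by
      have h1 : c * (α * d) ≤ c * g := mul_le_mul_of_nonneg_left hg' hc0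
      have h2 : c * (α * d) = BH * d := by
        show BH / α * (α * d) = BH * d
        field_simp
      linarith
    calc -(((c : ℝ) : EReal) * (g : EReal)) = ((-(c * g) : ℝ) : EReal) := by
          rw [← EReal.coe_mul, ← EReal.coe_neg]
      _ ≤ (r : EReal) := by exact_mod_cast key
end

section
/- Optimality rate of deterministic R-OpEx for monotone nonsmooth BVI: There is an absolute constant C > 0 such that the following holds. Let X ⊆ ℝ^n be nonempty compact convex with diameter D_X > 0, let F, H : ℝ^n → ℝ^n be monotone on X with ‖F(x₁) − F(x₂)‖ ≤ L_F‖x₁ − x₂‖ + M_F and ‖H(x₁) − H(x₂)‖ ≤ L_H‖x₁ − x₂‖ + M_H for all x₁, x₂ ∈ X, and suppose the solution set X_F^* of VI(F, X) is nonempty. Fix an integer K ≥ 2, set η := K^{−1/4} and γ := D_X/(8D_X(L_F + ηL_H) + √(K(M_F² + η²M_H²))) (assume the denominator is positive), and run deterministic R-OpEx with τ_k = θ_k = 1, η_k = η, γ_k = γ for all k, producing x̄_K := (1/(K−1))·Σ_{k=1}^{K−1} x_{k+1}. Then Gap(x̄_K, H, X_F^*) := sup_{x ∈ X_F^*} ⟨H(x),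 x̄_K − x⟩ ≤ C·D_X·(D_X L_F/K^{3/4} + D_X L_H/K + M_F/K^{1/4} + M_H/K^{1/2}). -/
/-!
Fix `z ∈ X_F^*` and put `G := F + η • H`, `L := L_F + η L_H`, `M := M_F + η M_H`. Each R-OpEx
step is a proximal step with the optimistic direction `2 G(x_k) − G(x_{k-1})`; the three-point
inequality of that step, together with `‖G a − G b‖ ≤ L ‖a − b‖ + M` and `4 γ L ≤ 1`, shows that
the energy `‖x_{k+1} − z‖² / (2γ) − ⟪G x_{k+1} − G x_k, x_{k+1} − z⟫ + L/2 ‖x_{k+1} − x_k‖²`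
drops by at least `⟪G x_{k+1}, x_{k+1} − z⟫ − γ M²` per step, and it is never below `−γ M²`.
Hence `∑ₖ ⟪G x_{k+1}, x_{k+1} − z⟫ ≤ ‖x_1 − z‖² / (2γ) + K γ M²`. Monotonicity of `F` and `H`
and the variational inequality at `z` bound each summand below by `η ⟪H z, x_{k+1} − z⟫`, whose
sum is `η (K − 1) ⟪H z, x̄_K − z⟫`. With the prescribed `γ` and `η = K^{-1/4}` the quotient is
the stated rate.
-/

open RealInnerProductSpace

open Finset

theorem mul_sub_sq_div_le {γ : ℝ} (hγ : 0 < γ) (M r : ℝ) :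
    M * r - r ^ 2 / (4 * γ) ≤ γ * M ^ 2 := by
  have hsq : (r - 2 * γ * M) ^ 2 / (4 * γ) = r ^ 2 / (4 * γ) - M * r + γ * M ^ 2 := by
    field_simp
    ring
  linarith [div_nonneg (sq_nonneg (r - 2 * γ * M)) (by positivity : (0 : ℝ) ≤ 4 * γ)]

theorem mul_sq_le_sq_div_four_mul {L γ : ℝ} (hγ : 0 < γ) (hγL : 4 * γ * L ≤ 1) (r : ℝ) :
    L * r ^ 2 ≤ r ^ 2 / (4 * γ) := by
  rw [le_div_iff₀ (by positivity)]
  nlinarith [sq_nonneg r]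

theorem mul_sub_sq_le_of_le {L M γ w d₀ d₁ : ℝ} (hγ : 0 < γ) (hL : 0 ≤ L) (hγL : 4 * γ * L ≤ 1)
    (hd₁ : 0 ≤ d₁) (hw : w ≤ L * d₀ + M) :
    w * d₁ - 1 / (2 * γ) * d₁ ^ 2 ≤ L / 2 * d₀ ^ 2 - L / 2 * d₁ ^ 2 + γ * M ^ 2 := by
  have hwd := mul_le_mul_of_nonneg_right hw hd₁
  have hamgm : 0 ≤ L * (d₀ - d₁) ^ 2 := by positivity
  have hhalf : 1 / (2 * γ) * d₁ ^ 2 = 2 * (d₁ ^ 2 / (4 * γ)) := by field_simp; ring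
  linarith [mul_sq_le_sq_div_four_mul hγ hγL d₁, mul_sub_sq_div_le hγ M d₁]

theorem neg_mul_sq_le_of_le {L M γ p d r : ℝ} (hγ : 0 < γ) (hL : 0 ≤ L) (hγL : 4 * γ * L ≤ 1)
    (hp : p ≤ (L * d + M) * r) :
    -(γ * M ^ 2) ≤ 1 / (2 * γ) * r ^ 2 - p + L / 2 * d ^ 2 := by
  have hamgm : 0 ≤ L * (d - r) ^ 2 := by positivity
  have hhalf : 1 / (2 * γ) * r ^ 2 = 2 * (r ^ 2 / (4 * γ)) := by field_simp; ring
  linarith [mul_sq_le_sq_div_four_mul hγ hγL r, mul_sub_sq_div_le hγ M r,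
    div_nonneg (sq_nonneg r) (by positivity : (0 : ℝ) ≤ 4 * γ)]

section InnerProductSpace

variable {E : Type*} [NormedAddCommGroup E] [InnerProductSpace ℝ E]

theorem IsMinOn.inner_sub_le_of_prox {X : Set E} (hX : Convex ℝ X) {g x₀ x₁ z : E} {c : ℝ}
    (hmin : IsMinOn (fun w => ⟪g, w⟫ + c * ‖w - x₀‖ ^ 2) X x₁) (hx₁ : x₁ ∈ X) (hz : z ∈ X) :
    ⟪g, x₁ - z⟫ ≤ c * (‖x₀ - z‖ ^ 2 - ‖x₁ - z‖ ^ 2 - ‖x₁ - x₀‖ ^ 2) := by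
  have hderiv := (innerSL ℝ g).hasFDerivAt.add
    (((hasFDerivAt_id x₁).sub_const x₀).norm_sq.const_mul c)
  have hfermat := hmin.localize.hasFDerivWithinAt_nonneg hderiv.hasFDerivWithinAt
    (sub_mem_posTangentConeAt_of_segment_subset (hX.segment_subset hx₁ hz))
  simp only [id_eq, ContinuousLinearMap.comp_id, add_apply, coe_innerSL_apply, smul_apply,
    nsmul_eq_mul, Nat.cast_ofNat, smul_eq_mul] at hfermat
  have hpolar : ‖x₀ - z‖ ^ 2 - ‖x₁ - z‖ ^ 2 - ‖x₁ - x₀‖ ^ 2 = 2 * ⟪x₁ - x₀, z - x₁⟫ := by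
    rw [show x₀ - z = (x₁ - z) - (x₁ - x₀) by abel, norm_sub_sq_real, real_inner_comm,
      ← neg_sub z x₁, inner_neg_right]
    ring
  rw [hpolar, ← neg_sub z, inner_neg_right]
  linarith

theorem norm_add_smul_sub_add_smul_le {F H : E → E} {a b : E} {LF MF LH MH η : ℝ} (hη : 0 ≤ η)
    (hF : ‖F a - F b‖ ≤ LF * ‖a - b‖ + MF) (hH : ‖H a - H b‖ ≤ LH * ‖a - b‖ + MH) :
    ‖F a + η • H a - (F b + η • H b)‖ ≤ (LF + η * LH) * ‖a - b‖ + (MF + η * MH) := by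
  rw [add_sub_add_comm, ← smul_sub]
  calc ‖F a - F b + η • (H a - H b)‖ ≤ ‖F a - F b‖ + η * ‖H a - H b‖ := by
        grw [norm_add_le, norm_smul, Real.norm_of_nonneg hη]
    _ ≤ _ := by linarith [mul_le_mul_of_nonneg_left hH hη]

theorem mul_inner_le_inner_add_smul {F H : E → E} {y z : E} {η : ℝ} (hη : 0 ≤ η)
    (hF : 0 ≤ ⟪F y - F z, y - z⟫) (hH : 0 ≤ ⟪H y - H z, y - z⟫) (hz : 0 ≤ ⟪F z, y - z⟫) :
    η * ⟪H z, y - z⟫ ≤ ⟪F y + η • H y, y - z⟫ := by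
  rw [inner_sub_left] at hF hH
  rw [inner_add_left, real_inner_smul_left]
  linarith [mul_nonneg hη (sub_nonneg.mpr hH)]

theorem natCast_card_mul_inner_average_sub {ι : Type*} {s : Finset ι} (hs : s.Nonempty)
    (v z : E) (y : ι → E) :
    (#s : ℝ) * ⟪v, (#s : ℝ)⁻¹ • ∑ i ∈ s, y i - z⟫ = ∑ i ∈ s, ⟪v, y i - z⟫ := by
  have hcard : (#s : ℝ) ≠ 0 := by simp [hs.ne_empty]
  simp only [inner_sub_right, real_inner_smul_right, inner_sum, sum_sub_distrib, sum_const,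
    nsmul_eq_mul]
  field_simp

noncomputable def optimisticEnergy (G : E → E) (L γ : ℝ) (z x₀ x₁ : E) : ℝ :=
  1 / (2 * γ) * ‖x₁ - z‖ ^ 2 - ⟪G x₁ - G x₀, x₁ - z⟫ + L / 2 * ‖x₁ - x₀‖ ^ 2

section OptimisticGradient

variable {X : Set E} {G : E → E} {L M γ : ℝ}

theorem optimisticEnergy_step (hX : Convex ℝ X) (hγ : 0 < γ) (hL : 0 ≤ L)
    (hγL : 4 * γ * L ≤ 1) {x₀ x₁ x₂ z : E} (hG : ‖G x₁ - G x₀‖ ≤ L * ‖x₁ - x₀‖ + M)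
    (hmin : IsMinOn (fun w => ⟪G x₁ + (G x₁ - G x₀), w⟫ + 1 / (2 * γ) * ‖w - x₁‖ ^ 2) X x₂)
    (hx₂ : x₂ ∈ X) (hz : z ∈ X) :
    ⟪G x₂, x₂ - z⟫ + optimisticEnergy G L γ z x₁ x₂
      ≤ optimisticEnergy G L γ z x₀ x₁ + γ * M ^ 2 := by
  have hprox := hmin.inner_sub_le_of_prox hX hx₂ hz
  have hsplit : ⟪G x₂, x₂ - z⟫ = ⟪G x₁ + (G x₁ - G x₀), x₂ - z⟫ + ⟪G x₂ - G x₁, x₂ - z⟫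
      - ⟪G x₁ - G x₀, x₁ - z⟫ - ⟪G x₁ - G x₀, x₂ - x₁⟫ := by
    simp only [inner_add_left, inner_sub_left, inner_sub_right]
    ring
  have hcs : -⟪G x₁ - G x₀, x₂ - x₁⟫ ≤ ‖G x₁ - G x₀‖ * ‖x₂ - x₁‖ :=
    (neg_le_abs _).trans (abs_real_inner_le_norm _ _)
  have herr := mul_sub_sq_le_of_le hγ hL hγL (norm_nonneg (x₂ - x₁)) hG
  unfold optimisticEnergy
  linarith

theorem neg_mul_sq_le_optimisticEnergy (hγ : 0 < γ) (hL : 0 ≤ L) (hγL : 4 * γ * L ≤ 1)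
    {x₀ x₁ z : E} (hG : ‖G x₁ - G x₀‖ ≤ L * ‖x₁ - x₀‖ + M) :
    -(γ * M ^ 2) ≤ optimisticEnergy G L γ z x₀ x₁ :=
  neg_mul_sq_le_of_le hγ hL hγL <| (real_inner_le_norm _ _).trans <|
    mul_le_mul_of_nonneg_right hG (norm_nonneg _)

theorem sum_inner_add_optimisticEnergy_le (hX : Convex ℝ X) (hγ : 0 < γ) (hL : 0 ≤ L)
    (hγL : 4 * γ * L ≤ 1) (hG : ∀ a ∈ X, ∀ b ∈ X, ‖G a - G b‖ ≤ L * ‖a - b‖ + M)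
    {x : ℕ → E} {z : E} (hz : z ∈ X) (N : ℕ) (hx : ∀ k ≤ N + 1, x k ∈ X)
    (hmin : ∀ k ∈ Icc 1 N, IsMinOn
      (fun w => ⟪G (x k) + (G (x k) - G (x (k - 1))), w⟫ + 1 / (2 * γ) * ‖w - x k‖ ^ 2) X
      (x (k + 1))) :
    ∑ k ∈ Icc 1 N, ⟪G (x (k + 1)), x (k + 1) - z⟫ + optimisticEnergy G L γ z (x N) (x (N + 1))
      ≤ optimisticEnergy G L γ z (x 0) (x 1) + N * (γ * M ^ 2) := by
  induction N with
  | zero => simp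
  | succ N ih =>
    have hstep := optimisticEnergy_step hX hγ hL hγL
      (hG _ (hx (N + 1) (by omega)) _ (hx N (by omega))) (hmin (N + 1) (by simp))
      (hx (N + 2) le_rfl) hz
    have hprev := ih (fun k hk => hx k (by omega))
      (fun k hk => hmin k (Icc_subset_Icc_right (by omega) hk))
    rw [sum_Icc_succ_top (by omega)]
    push_cast
    linarith

theorem sum_inner_le_of_optimistic (hX : Convex ℝ X) (hγ : 0 < γ) (hL : 0 ≤ L)
    (hγL : 4 * γ * L ≤ 1) (hG : ∀ a ∈ X, ∀ b ∈ X, ‖G a - G b‖ ≤ L * ‖a - b‖ + M)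
    {x : ℕ → E} {z : E} (hz : z ∈ X) (N : ℕ) (hx : ∀ k ≤ N + 1, x k ∈ X) (hx01 : x 0 = x 1)
    (hmin : ∀ k ∈ Icc 1 N, IsMinOn
      (fun w => ⟪G (x k) + (G (x k) - G (x (k - 1))), w⟫ + 1 / (2 * γ) * ‖w - x k‖ ^ 2) X
      (x (k + 1))) :
    ∑ k ∈ Icc 1 N, ⟪G (x (k + 1)), x (k + 1) - z⟫
      ≤ 1 / (2 * γ) * ‖x 1 - z‖ ^ 2 + (N + 1) * (γ * M ^ 2) := by
  have hsum := sum_inner_add_optimisticEnergy_le hX hγ hL hγL hG hz N hx hmin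
  have hlast := neg_mul_sq_le_optimisticEnergy (z := z) hγ hL hγL
    (hG _ (hx (N + 1) le_rfl) _ (hx N (by omega)))
  have hfirst : optimisticEnergy G L γ z (x 0) (x 1) = 1 / (2 * γ) * ‖x 1 - z‖ ^ 2 := by
    simp [optimisticEnergy, hx01]
  linarith

end OptimisticGradient

theorem inner_average_sub_le_of_ropex {X : Set E} (hX : Convex ℝ X) {F H : E → E}
    {LF MF LH MH η γ : ℝ} (hFmono : ∀ a ∈ X, ∀ b ∈ X, 0 ≤ ⟪F a - F b, a - b⟫)
    (hHmono : ∀ a ∈ X, ∀ b ∈ X, 0 ≤ ⟪H a - H b, a - b⟫)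
    (hF : ∀ a ∈ X, ∀ b ∈ X, ‖F a - F b‖ ≤ LF * ‖a - b‖ + MF)
    (hH : ∀ a ∈ X, ∀ b ∈ X, ‖H a - H b‖ ≤ LH * ‖a - b‖ + MH) (hLF : 0 ≤ LF) (hLH : 0 ≤ LH)
    (hη : 0 < η) (hγ : 0 < γ) (hγL : 4 * γ * (LF + η * LH) ≤ 1) {x : ℕ → E} {N : ℕ}
    (hN : 1 ≤ N) (hx01 : x 0 = x 1) (hx1 : x 1 ∈ X) (hx : ∀ k ∈ Icc 1 N, x (k + 1) ∈ X)
    (hmin : ∀ k ∈ Icc 1 N, IsMinOn (fun w => ⟪F (x k) + η • H (x k)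
      + (F (x k) + η • H (x k) - (F (x (k - 1)) + η • H (x (k - 1)))), w⟫
      + 1 / (2 * γ) * ‖w - x k‖ ^ 2) X (x (k + 1)))
    {z : E} (hz : z ∈ X) (hzF : ∀ y ∈ X, 0 ≤ ⟪F z, y - z⟫) :
    ⟪H z, (N : ℝ)⁻¹ • ∑ k ∈ Icc 1 N, x (k + 1) - z⟫
      ≤ (1 / (2 * γ) * ‖x 1 - z‖ ^ 2 + (N + 1) * (γ * (MF + η * MH) ^ 2)) / (η * N) := by
  have hxX : ∀ k ≤ N + 1, x k ∈ X
    | 0, _ => hx01 ▸ hx1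
    | 1, _ => hx1
    | k + 2, hk => hx (k + 1) (mem_Icc.2 ⟨by omega, by omega⟩)
  have hregret := sum_inner_le_of_optimistic (G := fun y => F y + η • H y) hX hγ (by positivity)
    hγL (fun a ha b hb => norm_add_smul_sub_add_smul_le hη.le (hF a ha b hb) (hH a ha b hb))
    hz N hxX hx01 hmin
  have hmono : ∑ k ∈ Icc 1 N, η * ⟪H z, x (k + 1) - z⟫
      ≤ ∑ k ∈ Icc 1 N, ⟪F (x (k + 1)) + η • H (x (k + 1)), x (k + 1) - z⟫ :=
    sum_le_sum fun k hk => mul_inner_le_inner_add_smul hη.le (hFmono _ (hx k hk) z hz)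
      (hHmono _ (hx k hk) z hz) (hzF _ (hx k hk))
  have havg := natCast_card_mul_inner_average_sub (nonempty_Icc.2 hN) (H z) z (fun k => x (k + 1))
  rw [Nat.card_Icc, Nat.add_sub_cancel] at havg
  rw [le_div_iff₀ (by positivity)]
  calc ⟪H z, (N : ℝ)⁻¹ • ∑ k ∈ Icc 1 N, x (k + 1) - z⟫ * (η * N)
      = ∑ k ∈ Icc 1 N, η * ⟪H z, x (k + 1) - z⟫ := by rw [← mul_sum, ← havg]; ring
    _ ≤ _ := hmono.trans hregret

end InnerProductSpace

theorem four_mul_stepSize_le_one {D L q γ : ℝ} (hS : 0 < 8 * D * L + √q)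
    (hγ : γ = D / (8 * D * L + √q)) : 4 * γ * L ≤ 1 := by
  have h : 4 * γ * L = 4 * D * L / (8 * D * L + √q) := by rw [hγ]; ring
  rw [h, div_le_one hS]
  linarith [Real.sqrt_nonneg q]

theorem ropex_regret_le {K D LF LH MF MH η γ r : ℝ} (hK : 0 ≤ K) (hD : 0 < D) (hLF : 0 ≤ LF)
    (hLH : 0 ≤ LH) (hMF : 0 ≤ MF) (hMH : 0 ≤ MH) (hη : 0 ≤ η)
    (hS : 0 < 8 * D * (LF + η * LH) + √(K * (MF ^ 2 + η ^ 2 * MH ^ 2)))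
    (hγ : γ = D / (8 * D * (LF + η * LH) + √(K * (MF ^ 2 + η ^ 2 * MH ^ 2))))
    (hr : r ≤ 2 * D) (hr0 : 0 ≤ r) :
    1 / (2 * γ) * r ^ 2 + K * (γ * (MF + η * MH) ^ 2)
      ≤ 16 * D ^ 2 * (LF + η * LH) + 4 * D * √K * (MF + η * MH) := by
  set L := LF + η * LH
  set Q := MF ^ 2 + η ^ 2 * MH ^ 2
  have hγ0 : 0 < γ := hγ ▸ div_pos hD hS
  have hfirst : 1 / (2 * γ) * r ^ 2 ≤ 16 * D ^ 2 * L + 2 * D * √(K * Q) :=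
    calc 1 / (2 * γ) * r ^ 2 ≤ 1 / (2 * γ) * (2 * D) ^ 2 := by gcongr
      _ = _ := by rw [hγ]; field_simp; ring
  have hγq : γ * √(K * Q) ≤ D := by
    rw [hγ, div_mul_eq_mul_div, div_le_iff₀ hS]
    nlinarith [mul_nonneg (mul_nonneg hD.le hD.le) (by positivity : 0 ≤ L)]
  have hsecond : K * (γ * (MF + η * MH) ^ 2) ≤ 2 * D * √(K * Q) :=
    calc K * (γ * (MF + η * MH) ^ 2) ≤ K * (γ * (2 * Q)) := by
          gcongr; nlinarith [sq_nonneg (MF - η * MH)]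
      _ = 2 * (γ * √(K * Q)) * √(K * Q) := by
          rw [mul_assoc 2, mul_assoc γ, Real.mul_self_sqrt (by positivity)]; ring
      _ ≤ 2 * D * √(K * Q) := by gcongr
  have hsqrt : √(K * Q) ≤ √K * (MF + η * MH) := by
    rw [Real.sqrt_mul hK]
    gcongr
    exact Real.sqrt_le_iff.2 ⟨by positivity, by nlinarith [mul_nonneg hMF (mul_nonneg hη hMH)]⟩
  nlinarith [mul_le_mul_of_nonneg_left hsqrt (by positivity : (0 : ℝ) ≤ 4 * D)]


theorem ropex_rate_le_of_pow_four {s D LF LH MF MH : ℝ} (hs : 0 < s) (hs4 : 2 ≤ s ^ 4)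
    (hD : 0 ≤ D) (hLF : 0 ≤ LF) (hLH : 0 ≤ LH) (hMF : 0 ≤ MF) (hMH : 0 ≤ MH) :
    (16 * D ^ 2 * (LF + s⁻¹ * LH) + 4 * D * s ^ 2 * (MF + s⁻¹ * MH)) / (s⁻¹ * (s ^ 4 - 1))
      ≤ 32 * D * (D * LF / s ^ 3 + D * LH / s ^ 4 + MF / s + MH / s ^ 2) := by
  set A := 16 * D ^ 2 * (LF + s⁻¹ * LH) + 4 * D * s ^ 2 * (MF + s⁻¹ * MH)
  have hA : 0 ≤ A := by positivity
  calc A / (s⁻¹ * (s ^ 4 - 1)) = A * s / (s ^ 4 - 1) := by field_simp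
    _ ≤ A * s / (s ^ 4 / 2) := by gcongr; linarith
    _ = 2 * A / s ^ 3 := by field_simp
    _ ≤ _ := by
      rw [div_le_iff₀ (by positivity)]
      simp only [A]
      field_simp
      nlinarith [mul_nonneg (mul_nonneg hD hMF) (pow_pos hs 3).le,
        mul_nonneg (mul_nonneg hD hMH) (pow_pos hs 2).le]

theorem ropex_rate_le {K D LF LH MF MH : ℝ} (hK : 2 ≤ K)
    (hD : 0 ≤ D) (hLF : 0 ≤ LF) (hLH : 0 ≤ LH) (hMF : 0 ≤ MF) (hMH : 0 ≤ MH) :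
    (16 * D ^ 2 * (LF + K ^ (-(1 / 4 : ℝ)) * LH) + 4 * D * √K * (MF + K ^ (-(1 / 4 : ℝ)) * MH))
        / (K ^ (-(1 / 4 : ℝ)) * (K - 1))
      ≤ 32 * D * (D * LF / K ^ ((3 : ℝ) / 4) + D * LH / K + MF / K ^ ((1 : ℝ) / 4)
        + MH / K ^ ((1 : ℝ) / 2)) := by
  obtain ⟨s, hs, rfl⟩ : ∃ s, 0 < s ∧ K = s ^ 4 :=
    ⟨K ^ (1 / 4 : ℝ), by positivity, by
      rw [← Real.rpow_natCast, ← Real.rpow_mul (by positivity)]; norm_num⟩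
  have hpow (r : ℝ) : (s ^ 4) ^ r = s ^ (4 * r) := by
    rw [← Real.rpow_natCast, ← Real.rpow_mul hs.le]; norm_num
  have hsqrt : √(s ^ 4) = s ^ 2 := by
    rw [show s ^ 4 = (s ^ 2) ^ 2 by ring, Real.sqrt_sq (by positivity)]
  norm_num [hpow, hsqrt, Real.rpow_neg_one]
  exact ropex_rate_le_of_pow_four hs hK hD hLF hLH hMF hMH

/-- **Optimality rate of deterministic R-OpEx for monotone nonsmooth BVI.**
With constant parameters `τ_k = θ_k = 1`, `η = K^{-1/4}`,
`γ = D_X / (8 D_X (L_F + η L_H) + √(K (M_F² + η² M_H²)))`, the averaged iterate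
`x̄_K` satisfies
`Gap(x̄_K, H, X_F^*) ≤ C·D_X·(D_X L_F/K^{3/4} + D_X L_H/K + M_F/K^{1/4} + M_H/K^{1/2})`. -/
theorem ropex_optimality_rate_monotone :
    ∃ C : ℝ, 0 < C ∧
      ∀ (n : ℕ) (X : Set (EuclideanSpace ℝ (Fin n)))
        (F H : EuclideanSpace ℝ (Fin n) → EuclideanSpace ℝ (Fin n))
        (LF MF LH MH DX : ℝ) (K : ℕ) (η γ : ℝ)
        (x : ℕ → EuclideanSpace ℝ (Fin n)),
        X.Nonempty → IsCompact X → Convex ℝ X →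
        DX = Metric.diam X / 2 → 0 < DX →
        0 ≤ LF → 0 ≤ MF → 0 ≤ LH → 0 ≤ MH →
        (∀ a ∈ X, ∀ b ∈ X, 0 ≤ ⟪F a - F b, a - b⟫) →
        (∀ a ∈ X, ∀ b ∈ X, 0 ≤ ⟪H a - H b, a - b⟫) →
        (∀ a ∈ X, ∀ b ∈ X, ‖F a - F b‖ ≤ LF * ‖a - b‖ + MF) →
        (∀ a ∈ X, ∀ b ∈ X, ‖H a - H b‖ ≤ LH * ‖a - b‖ + MH) →
        (VISol F X).Nonempty →
        2 ≤ K →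
        η = (K : ℝ) ^ (-(1 / 4 : ℝ)) →
        0 < 8 * DX * (LF + η * LH) + Real.sqrt (K * (MF ^ 2 + η ^ 2 * MH ^ 2)) →
        γ = DX / (8 * DX * (LF + η * LH) + Real.sqrt (K * (MF ^ 2 + η ^ 2 * MH ^ 2))) →
        x 0 = x 1 → x 1 ∈ X →
        (∀ k, 1 ≤ k → k ≤ K - 1 → x (k + 1) ∈ X) →
        (∀ k, 1 ≤ k → k ≤ K - 1 → ∀ z ∈ X,
          ⟪F (x k) + η • H (x k)
              + (F (x k) + η • H (x k) - F (x (k - 1)) - η • H (x (k - 1))), x (k + 1)⟫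
              + 1 / (2 * γ) * ‖x (k + 1) - x k‖ ^ 2
            ≤ ⟪F (x k) + η • H (x k)
              + (F (x k) + η • H (x k) - F (x (k - 1)) - η • H (x (k - 1))), z⟫
              + 1 / (2 * γ) * ‖z - x k‖ ^ 2) →
        Gap H (VISol F X) (((K : ℝ) - 1)⁻¹ • ∑ k ∈ Finset.Icc 1 (K - 1), x (k + 1))
          ≤ ((C * DX * (DX * LF / (K : ℝ) ^ ((3 : ℝ) / 4) + DX * LH / (K : ℝ)
              + MF / (K : ℝ) ^ ((1 : ℝ) / 4) + MH / (K : ℝ) ^ ((1 : ℝ) / 2)) : ℝ) : EReal) := by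
  refine ⟨32, by norm_num, ?_⟩
  intro n X F H LF MF LH MH DX K η γ x _ hXc hXconv hDX hDX0 hLF hMF hLH hMH hFmono hHmono hFlip
    hHlip _ hK hη hden hγ hx01 hx1 hxmem hopt
  refine iSup₂_le fun z hz => EReal.coe_le_coe_iff.2 ?_
  have hη0 : 0 < η := hη ▸ by positivity
  have hK1 : (0 : ℝ) < K - 1 := by
    have : (2 : ℝ) ≤ K := by exact_mod_cast hK
    linarith
  have hgap := inner_average_sub_le_of_ropex hXconv hFmono hHmono hFlip hHlip hLF hLH hη0
    (hγ ▸ div_pos hDX0 hden) (four_mul_stepSize_le_one hden hγ)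
    (N := K - 1) (by omega) hx01 hx1 (fun k hk => hxmem k (mem_Icc.1 hk).1 (mem_Icc.1 hk).2)
    (fun k hk => isMinOn_iff.2 fun w hw => by
      simpa only [sub_sub] using hopt k (mem_Icc.1 hk).1 (mem_Icc.1 hk).2 w hw) hz.1 hz.2
  rw [Nat.cast_pred (by omega), sub_add_cancel] at hgap
  have hdiam : ‖x 1 - z‖ ≤ 2 * DX := by
    rw [← dist_eq_norm]; linarith [Metric.dist_le_diam_of_mem hXc.isBounded hx1 hz.1]
  calc _ ≤ _ := hgap
    _ ≤ (16 * DX ^ 2 * (LF + η * LH) + 4 * DX * √K * (MF + η * MH)) / (η * (K - 1)) :=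
        div_le_div_of_nonneg_right (ropex_regret_le (by positivity) hDX0 hLF hLH hMF hMH hη0.le
          hden hγ hdiam (norm_nonneg _)) (by positivity)
    _ ≤ _ := hη ▸ ropex_rate_le (by exact_mod_cast hK) hDX0.le hLF hLH hMF hMH
end
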